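/- Let k = D·P_D > 0, H, R, T_d, P_L > 0, and let Δf solve 2H·Δf' + k·Δf = (R/T_d)·t − P_L with Δf(0) = 0. Then Δf'(t) = 0 at time t* = (2H/k)·log(1 + k·T_d·P_L/(2H·R) ) (assuming t* ≤ T_d), and Δf is decreasing on [0, t*) and increasing on (t*, T_d]. -/

import Mathlib

/-- The damped swing equation has its unique stationary point (nadir) at
t* = (2H/k)·log(1 + k·T_d·P_L/(2·H·R)); Δf decreases before and increases after. -/
theorem stmt_4 (H k R Td PL : ℝ) (Δf Δf' : ℝ → ℝ)
    (hH : 0 < H) (hk : 0 < k) (hR : 0 < R) (hTd : 0 < Td) (hPL : 0 < PL)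
    (h0 : Δf 0 = 0)
    (hderiv : ∀ t ∈ Set.Icc (0 : ℝ) Td, HasDerivAt Δf (Δf' t) t)
    (hode : ∀ t ∈ Set.Icc (0 : ℝ) Td,
      2 * H * Δf' t + k * Δf t = (R / Td) * t - PL)
    (tstar : ℝ)
    (htstar : tstar = (2 * H / k) * Real.log (1 + k * Td * PL / (2 * H * R)))
    (htle : tstar ≤ Td) :
    Δf' tstar = 0 ∧
      StrictAntiOn Δf (Set.Icc 0 tstar) ∧
      StrictMonoOn Δf (Set.Icc tstar Td) := by
  have hH2 : (0:ℝ) < 2 * H := by linarith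
  obtain ⟨a, ha⟩ : ∃ a : ℝ, a = k / (2 * H) := ⟨_, rfl⟩
  obtain ⟨A, hA⟩ : ∃ A : ℝ, A = R / (k * Td) := ⟨_, rfl⟩
  obtain ⟨B, hB⟩ : ∃ B : ℝ, B = (-PL - 2 * H * A) / k := ⟨_, rfl⟩
  obtain ⟨C, hC⟩ : ∃ C : ℝ, C = -B := ⟨_, rfl⟩
  have ha0 : 0 < a := ha ▸ div_pos hk hH2
  have hA0 : 0 < A := hA ▸ div_pos hR (mul_pos hk hTd)
  have hka : 2 * H * a = k := by rw [ha]; field_simp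
  have hkA : k * A = R / Td := by rw [hA]; field_simp
  have hkB : -PL - k * B = 2 * H * A := by rw [hB]; field_simp; ring
  have haA : 2 * H * (a * A) = R / Td := by rw [ha, hA]; field_simp
  have haB : 2 * H * (a * B + A) = -PL := by rw [ha, hB]; field_simp; ring
  have harg : (0:ℝ) < 1 + k * Td * PL / (2 * H * R) := by positivity
  have hexp_ts : Real.exp (a * tstar) = 1 + k * Td * PL / (2 * H * R) := by
    rw [htstar]
    have h1 : a * (2 * H / k * Real.log (1 + k * Td * PL / (2 * H * R)))
        = Real.log (1 + k * Td * PL / (2 * H * R)) := by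
      rw [ha]; field_simp
    rw [h1, Real.exp_log harg]
  have haC : a * C = A * Real.exp (a * tstar) := by
    rw [hexp_ts, hC, hB, hA, ha]
    field_simp
    ring
  have hts0 : 0 < tstar := by
    rw [htstar]
    have h1 : (0:ℝ) < Real.log (1 + k * Td * PL / (2 * H * R)) := by
      apply Real.log_pos
      have : 0 < k * Td * PL / (2 * H * R) := by positivity
      linarith
    positivity
  obtain ⟨F, hF⟩ : ∃ F : ℝ → ℝ,
      F = fun t => Real.exp (a * t) * (Δf t - (A * t + B)) := ⟨_, rfl⟩
  have hFderiv : ∀ t ∈ Set.Icc (0:ℝ) Td, HasDerivAt F 0 t := by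
    intro t ht
    have he : HasDerivAt (fun t : ℝ => Real.exp (a * t)) (a * Real.exp (a * t)) t := by
      have := ((hasDerivAt_id t).const_mul a).exp
      simpa [mul_comm] using this
    have hg : HasDerivAt (fun t => Δf t - (A * t + B)) (Δf' t - A) t := by
      have := (hderiv t ht).sub (((hasDerivAt_id t).const_mul A).add_const B)
      simp only [id_eq, mul_one] at this; exact this
    have hprod := he.mul hg
    have h2 : 2 * H * (a * Real.exp (a * t) * (Δf t - (A * t + B))
        + Real.exp (a * t) * (Δf' t - A)) = 2 * H * 0 := by
      linear_combination Real.exp (a*t) * (hode t ht) + (Real.exp (a*t) * Δf t) * hka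
        - (Real.exp (a*t) * t) * haA - Real.exp (a*t) * haB
    have h3 := mul_left_cancel₀ (ne_of_gt hH2) h2
    rw [h3] at hprod
    rw [hF]
    exact hprod
  have hFcont : ContinuousOn F (Set.Icc 0 Td) := fun t ht =>
    (hFderiv t ht).continuousAt.continuousWithinAt
  have hFconst : ∀ t ∈ Set.Icc (0:ℝ) Td, F t = F 0 := by
    apply constant_of_has_deriv_right_zero hFcont
    intro x hx
    exact (hFderiv x (Set.mem_Icc_of_Ico hx)).hasDerivWithinAt
  have hF0 : F 0 = C := by simp [hF, h0, hC]
  have hsol : ∀ t ∈ Set.Icc (0:ℝ) Td, Δf t = C * Real.exp (-(a * t)) + A * t + B := by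
    intro t ht
    have h1 : Real.exp (a * t) * (Δf t - (A * t + B)) = C := by
      have h2 := hFconst t ht; rw [hF0, hF] at h2; exact h2
    have hne : Real.exp (a * t) ≠ 0 := Real.exp_ne_zero _
    rw [Real.exp_neg]
    field_simp
    linear_combination h1
  have hsol' : ∀ t ∈ Set.Icc (0:ℝ) Td, Δf' t = A - a * C * Real.exp (-(a * t)) := by
    intro t ht
    have ho := hode t ht
    rw [hsol t ht] at ho
    have h2 : 2 * H * Δf' t = 2 * H * (A - a * C * Real.exp (-(a * t))) := by
      linear_combination ho + (C * Real.exp (-(a*t))) * hka - t * hkA + hkB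
    exact mul_left_cancel₀ (ne_of_gt hH2) h2
  have htsmem : tstar ∈ Set.Icc (0:ℝ) Td := ⟨le_of_lt hts0, htle⟩
  have hsign : ∀ t ∈ Set.Icc (0:ℝ) Td,
      Δf' t = A * (1 - Real.exp (a * (tstar - t))) := by
    intro t ht
    have harith : a * tstar + -(a * t) = a * (tstar - t) := by ring
    rw [hsol' t ht, haC, mul_assoc, ← Real.exp_add, harith]
    ring
  have hd0 : Δf' tstar = 0 := by
    rw [hsign tstar htsmem]
    simp
  refine ⟨hd0, ?_, ?_⟩
  · have hsub : Set.Icc (0:ℝ) tstar ⊆ Set.Icc 0 Td :=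
      Set.Icc_subset_Icc le_rfl htle
    refine strictAntiOn_of_deriv_neg (convex_Icc 0 tstar)
      (fun t ht => (hderiv t (hsub ht)).continuousAt.continuousWithinAt) ?_
    intro x hx
    rw [interior_Icc] at hx
    have hxm : x ∈ Set.Icc (0:ℝ) Td := hsub ⟨le_of_lt hx.1, le_of_lt hx.2⟩
    rw [(hderiv x hxm).deriv, hsign x hxm]
    have h1 : 1 < Real.exp (a * (tstar - x)) := by
      rw [← Real.exp_zero]
      apply Real.exp_lt_exp.2
      have : 0 < tstar - x := by linarith [hx.2]
      positivity
    nlinarith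
  · have hsub : Set.Icc tstar Td ⊆ Set.Icc (0:ℝ) Td :=
      Set.Icc_subset_Icc (le_of_lt hts0) le_rfl
    refine strictMonoOn_of_deriv_pos (convex_Icc tstar Td)
      (fun t ht => (hderiv t (hsub ht)).continuousAt.continuousWithinAt) ?_
    intro x hx
    rw [interior_Icc] at hx
    have hxm : x ∈ Set.Icc (0:ℝ) Td := hsub ⟨le_of_lt hx.1, le_of_lt hx.2⟩
    rw [(hderiv x hxm).deriv, hsign x hxm]
    have h1 : Real.exp (a * (tstar - x)) < 1 := by
      rw [← Real.exp_zero]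
      apply Real.exp_lt_exp.2
      have h2 : tstar - x < 0 := by linarith [hx.1]
      nlinarith
    nlinarith
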